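/- arXiv:2307.04362 — 4 statements merged into one kernel-verified Lean document; each statement's English description precedes it below -/
import Mathlib

section
/- For p ≥ 2, the function f(x) = x^p on [0,∞) is superquadratic: for every t ≥ 0 and all s ≥ 0, s^p ≥ t^p + p t^{p−1}(s−t) + |s−t|^p. -/
open Matrix
open scoped ComplexOrder

/-- A function `f : [0,∞) → ℝ` is superquadratic if for every `t ≥ 0` there is a constant
`C` with `f s ≥ f t + C * (s - t) + f |s - t|` for all `s ≥ 0`. -/
def Superquadratic (f : ℝ → ℝ) : Prop :=
  ∀ t : ℝ, 0 ≤ t → ∃ C : ℝ, ∀ s : ℝ, 0 ≤ s → f t + C * (s - t) + f |s - t| ≤ f s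

/-- Apply a real function to a matrix via the functional calculus (junk value `0` if the
matrix is not Hermitian). -/
noncomputable def mfun {n : ℕ} (f : ℝ → ℝ) (A : Matrix (Fin n) (Fin n) ℂ) :
    Matrix (Fin n) (Fin n) ℂ :=
  if h : A.IsHermitian then h.cfc f else 0

/-- `|A| = √(Aᴴ A)`. -/
noncomputable def matAbs {n : ℕ} (A : Matrix (Fin n) (Fin n) ℂ) : Matrix (Fin n) (Fin n) ℂ :=
  (Matrix.posSemidef_conjTranspose_mul_self A).1.eigenvectorUnitary.1 *
    diagonal ((↑) ∘ (√·) ∘ (Matrix.posSemidef_conjTranspose_mul_self A).1.eigenvalues) *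
    (star (Matrix.posSemidef_conjTranspose_mul_self A).1.eigenvectorUnitary : Matrix (Fin n) (Fin n) ℂ)

/-- Largest eigenvalue of a Hermitian matrix (junk value `0` otherwise). -/
noncomputable def lmax {n : ℕ} (A : Matrix (Fin n) (Fin n) ℂ) : ℝ :=
  if h : A.IsHermitian then ⨆ i, h.eigenvalues i else 0

/-- Smallest eigenvalue of a Hermitian matrix (junk value `0` otherwise). -/
noncomputable def lmin {n : ℕ} (A : Matrix (Fin n) (Fin n) ℂ) : ℝ :=
  if h : A.IsHermitian then ⨅ i, h.eigenvalues i else 0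

/-- `k`-th largest eigenvalue (`k = 0` gives the largest) of a Hermitian matrix
(junk value `0` otherwise). -/
noncomputable def lkth {n : ℕ} (A : Matrix (Fin n) (Fin n) ℂ) (k : Fin n) : ℝ :=
  if h : A.IsHermitian then (h.eigenvalues ∘ Tuple.sort h.eigenvalues) k.rev else 0

/-- The quadratic form `⟨Ax, x⟩` as a complex number. -/
noncomputable def qf {n : ℕ} (A : Matrix (Fin n) (Fin n) ℂ) (x : Fin n → ℂ) : ℂ :=
  star x ⬝ᵥ A *ᵥ x

/-- Löwner order: `A ⊑ B` iff `B - A` is positive semidefinite. -/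
def Loewner {n : ℕ} (A B : Matrix (Fin n) (Fin n) ℂ) : Prop :=
  (B - A).PosSemidef

/-- Superadditivity of `x ↦ x ^ q` for `q ≥ 1` on nonnegative reals. -/
lemma rpow_superadd {q : ℝ} (hq : 1 ≤ q) {a b : ℝ} (ha : 0 ≤ a) (hb : 0 ≤ b) :
    a ^ q + b ^ q ≤ (a + b) ^ q := by
  have := NNReal.add_rpow_le_rpow_add ⟨a, ha⟩ ⟨b, hb⟩ hq
  have h2 := NNReal.coe_le_coe.2 this
  push_cast at h2
  exact h2

/-- for `p ≥ 2`, `x ↦ x ^ p` is superquadratic with constant `p t^(p-1)`. -/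
theorem rpow_superquadratic (p : ℝ) (hp : 2 ≤ p) :
    ∀ t : ℝ, 0 ≤ t → ∀ s : ℝ, 0 ≤ s →
      Real.rpow t p + p * Real.rpow t (p - 1) * (s - t) + Real.rpow |s - t| p ≤
        Real.rpow s p := by
  have hp1 : (1:ℝ) ≤ p := by linarith
  have hq1 : (1:ℝ) ≤ p - 1 := by linarith
  intro t ht s hs
  show t ^ p + p * t ^ (p - 1) * (s - t) + |s - t| ^ p ≤ s ^ p
  rcases le_or_gt t s with hts | hst
  · -- case s ≥ t : G x = x^p - (x-t)^p - p t^(p-1) x is monotone on [t, ∞)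
    rw [abs_of_nonneg (by linarith)]
    have hmono : MonotoneOn (fun x : ℝ => x ^ p - (x - t) ^ p - p * t ^ (p-1) * x)
        (Set.Ici t) := by
      have hderiv : ∀ x : ℝ, HasDerivAt
          (fun x : ℝ => x ^ p - (x - t) ^ p - p * t ^ (p-1) * x)
          (p * x ^ (p-1) - p * (x - t) ^ (p-1) - p * t ^ (p-1)) x := by
        intro x
        have h1 : HasDerivAt (fun x : ℝ => x ^ p) (p * x ^ (p-1)) x := by
          simpa [mul_comm] using Real.hasDerivAt_rpow_const (x := x) (p := p) (Or.inr hp1)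
        have h2 : HasDerivAt (fun x : ℝ => (x - t) ^ p) (p * (x - t) ^ (p-1)) x := by
          have hin : HasDerivAt (fun x : ℝ => x - t) 1 x :=
            (hasDerivAt_id x).sub_const t
          have hout : HasDerivAt (fun y : ℝ => y ^ p) (p * (x - t) ^ (p-1)) (x - t) := by
            simpa [mul_comm] using
              Real.hasDerivAt_rpow_const (x := x - t) (p := p) (Or.inr hp1)
          exact (hout.comp x hin).congr_deriv (g' := p * (x - t) ^ (p-1)) (by ring)
        have h3 : HasDerivAt (fun x : ℝ => p * t ^ (p-1) * x) (p * t ^ (p-1)) x := by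
          simpa using (hasDerivAt_id x).const_mul (p * t ^ (p-1))
        exact (h1.sub h2).sub h3
      apply monotoneOn_of_deriv_nonneg (convex_Ici t)
        (fun x _ => (hderiv x).continuousAt.continuousWithinAt)
        (fun x _ => (hderiv x).differentiableAt.differentiableWithinAt)
      intro x hx
      rw [(hderiv x).deriv]
      rw [interior_Ici] at hx
      have hxt : t < x := hx
      have key : (x - t) ^ (p-1) + t ^ (p-1) ≤ x ^ (p-1) := by
        have := rpow_superadd hq1 (a := x - t) (b := t) (by linarith) ht
        simpa using this
      have hppos : 0 < p := by linarith
      nlinarith [key]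
    have := hmono (Set.self_mem_Ici) (Set.mem_Ici.2 hts) hts
    simp only at this
    have h0 : (t - t : ℝ) = 0 := by ring
    rw [h0, Real.zero_rpow (by positivity)] at this
    nlinarith [this]
  · -- case s < t : H x = x^p - (t-x)^p - p t^(p-1) x is antitone on [0, t]
    rw [abs_of_nonpos (by linarith), neg_sub]
    have hanti : AntitoneOn (fun x : ℝ => x ^ p - (t - x) ^ p - p * t ^ (p-1) * x)
        (Set.Icc 0 t) := by
      have hderiv : ∀ x : ℝ, HasDerivAt
          (fun x : ℝ => x ^ p - (t - x) ^ p - p * t ^ (p-1) * x)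
          (p * x ^ (p-1) + p * (t - x) ^ (p-1) - p * t ^ (p-1)) x := by
        intro x
        have h1 : HasDerivAt (fun x : ℝ => x ^ p) (p * x ^ (p-1)) x := by
          simpa [mul_comm] using Real.hasDerivAt_rpow_const (x := x) (p := p) (Or.inr hp1)
        have h2 : HasDerivAt (fun x : ℝ => (t - x) ^ p) (-(p * (t - x) ^ (p-1))) x := by
          have hin : HasDerivAt (fun x : ℝ => t - x) (-1) x := by
            simpa using ((hasDerivAt_id x).const_sub t)
          have hout : HasDerivAt (fun y : ℝ => y ^ p) (p * (t - x) ^ (p-1)) (t - x) := by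
            simpa [mul_comm] using
              Real.hasDerivAt_rpow_const (x := t - x) (p := p) (Or.inr hp1)
          have := hout.comp x hin
          exact this.congr_deriv (by ring)
        have h3 : HasDerivAt (fun x : ℝ => p * t ^ (p-1) * x) (p * t ^ (p-1)) x := by
          simpa using (hasDerivAt_id x).const_mul (p * t ^ (p-1))
        have h := (h1.sub h2).sub h3
        exact h.congr_deriv (by ring)
      apply antitoneOn_of_deriv_nonpos (convex_Icc 0 t)
        (fun x _ => (hderiv x).continuousAt.continuousWithinAt)
        (fun x _ => (hderiv x).differentiableAt.differentiableWithinAt)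
      intro x hx
      rw [(hderiv x).deriv]
      rw [interior_Icc] at hx
      have hx0 : 0 < x := hx.1
      have hxt : x < t := hx.2
      have key : x ^ (p-1) + (t - x) ^ (p-1) ≤ t ^ (p-1) := by
        have := rpow_superadd hq1 (a := x) (b := t - x) hx0.le (by linarith)
        simpa using this
      have hppos : 0 < p := by linarith
      nlinarith
    have := hanti (Set.mem_Icc.2 ⟨hs, hst.le⟩) (Set.mem_Icc.2 ⟨ht, le_refl t⟩) hst.le
    simp only at this
    have h0 : (t - t : ℝ) = 0 := by ring
    rw [h0, Real.zero_rpow (by positivity)] at this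
    nlinarith [this]
end

section
/- Let f:[0,∞)→ℝ be superquadratic, Φ: M_n(ℂ) → M_m(ℂ) a unital positive linear map, A an n×n positive semi-definite matrix, and x ∈ ℂ^m a unit vector. Then f(⟨Φ(A)x,x⟩) ≤ ⟨Φ(f(A))x,x⟩ − ⟨Φ(f(|A − ⟨Φ(A)x,x⟩ I_n|))x,x⟩. -/
open Matrix
open scoped ComplexOrder

section Helpers

lemma contOn_of_finite' {s : Set ℝ} (hs : s.Finite) (g : ℝ → ℝ) : ContinuousOn g s := by
  rw [continuousOn_iff_continuous_restrict]
  haveI := hs.to_subtype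
  exact continuous_of_discreteTopology

lemma contOn_spectrum' {n : ℕ} (A : Matrix (Fin n) (Fin n) ℂ) (g : ℝ → ℝ) :
    ContinuousOn g (spectrum ℝ A) := contOn_of_finite' A.finite_real_spectrum g

lemma posSemidef_cfc_of_nonneg' {n : ℕ} {A : Matrix (Fin n) (Fin n) ℂ} (hA : A.IsHermitian)
    (g : ℝ → ℝ) (hg : ∀ i, 0 ≤ g (hA.eigenvalues i)) : (cfc g A).PosSemidef := by
  rw [hA.cfc_eq, Matrix.IsHermitian.cfc, Unitary.conjStarAlgAut_apply, Matrix.star_eq_conjTranspose]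
  refine Matrix.PosSemidef.mul_mul_conjTranspose_same ?_ _
  refine Matrix.posSemidef_diagonal_iff.mpr fun i => ?_
  simpa using hg i

end Helpers

/-- the superquadratic Jensen inequality for unital positive linear maps. -/
theorem superquadratic_positive_map_jensen {n m : ℕ} (f : ℝ → ℝ) (hf : Superquadratic f)
    (Φ : Matrix (Fin n) (Fin n) ℂ →ₗ[ℂ] Matrix (Fin m) (Fin m) ℂ)
    (hΦ1 : Φ 1 = 1) (hΦpos : ∀ A : Matrix (Fin n) (Fin n) ℂ, A.PosSemidef → (Φ A).PosSemidef)
    (A : Matrix (Fin n) (Fin n) ℂ) (hA : A.PosSemidef)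
    (x : Fin m → ℂ) (hx : star x ⬝ᵥ x = 1) :
    f ((qf (Φ A) x).re) ≤
      (qf (Φ (mfun f A)) x).re -
        (qf (Φ (mfun f (matAbs (A - qf (Φ A) x • 1)))) x).re := by
  classical
  have hAH : A.IsHermitian := hA.1
  have hAsa : IsSelfAdjoint A := hAH
  have hΦA := hΦpos A hA
  have ht0 : (0 : ℂ) ≤ qf (Φ A) x := hΦA.dotProduct_mulVec_nonneg x
  set t : ℝ := (qf (Φ A) x).re with htdef
  have htc : qf (Φ A) x = (t : ℂ) := by
    obtain ⟨h1, h2⟩ := Complex.nonneg_iff.mp ht0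
    exact Complex.ext (by simp [htdef]) (by simp [← h2])
  have ht : 0 ≤ t := (Complex.nonneg_iff.mp ht0).1
  obtain ⟨C, hC⟩ := hf t ht
  have hsm : ∀ (r : ℝ) (k : ℕ) (B : Matrix (Fin k) (Fin k) ℂ), (r : ℂ) • B = r • B := by
    intro r k B
    rw [show ((r : ℂ)) = algebraMap ℝ ℂ r from rfl, algebraMap_smul]
  have halg : ∀ r : ℝ, algebraMap ℝ (Matrix (Fin n) (Fin n) ℂ) r = (r : ℂ) • 1 := by
    intro r
    rw [Algebra.algebraMap_eq_smul_one, hsm]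
  -- M = A - t•1 as a cfc
  have hM1 : A - (t : ℂ) • 1 = cfc (fun s : ℝ => s - t) A := by
    rw [cfc_sub (fun s : ℝ => s) (fun _ : ℝ => t) A (contOn_spectrum' A _) (contOn_spectrum' A _),
      cfc_id' ℝ A, cfc_const t A, halg]
  set M : Matrix (Fin n) (Fin n) ℂ := A - (t : ℂ) • 1 with hMdef
  have hMsa : IsSelfAdjoint M := by
    rw [hM1]; exact cfc_predicate _ A
  have hMH : M.IsHermitian := hMsa
  set h1 : ℝ → ℝ := fun s => f |s - t| with hh1def
  -- matAbs M = cfc abs M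
  have hNps : (cfc (|·| : ℝ → ℝ) M).PosSemidef :=
    posSemidef_cfc_of_nonneg' hMH _ (fun i => abs_nonneg _)
  have hsq : (cfc (|·| : ℝ → ℝ) M) ^ 2 = Mᴴ * M := by
    rw [← cfc_pow (|·| : ℝ → ℝ) 2 M (contOn_spectrum' M _) hMsa]
    have : (fun s : ℝ => |s| ^ 2) = fun s : ℝ => s ^ 2 := funext fun s => sq_abs s
    rw [this, cfc_pow_id M 2 hMsa, hMH.eq, pow_two]
  have habs : matAbs M = cfc (|·| : ℝ → ℝ) M :=
    by
    have hMM : Mᴴ * M = cfc (fun s : ℝ => s ^ 2) M := by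
      rw [cfc_pow_id M 2 hMsa, hMH.eq, pow_two]
    have e : matAbs M = cfc Real.sqrt (Mᴴ * M) := by
      rw [(Matrix.posSemidef_conjTranspose_mul_self M).1.cfc_eq, Matrix.IsHermitian.cfc,
        Unitary.conjStarAlgAut_apply]
      rfl
    have hc := cfc_comp' Real.sqrt (fun s : ℝ => s ^ 2) M
      (contOn_of_finite' ((Matrix.finite_real_spectrum (A := M)).image _) _) (contOn_spectrum' M _) hMsa
    rw [e, hMM, ← hc]
    simp only [Real.sqrt_sq_eq_abs]
  -- mfun via cfc
  have hmfun : ∀ (B : Matrix (Fin n) (Fin n) ℂ) (hB : B.IsHermitian) (g : ℝ → ℝ),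
      mfun g B = cfc g B := by
    intro B hB g
    rw [mfun, dif_pos hB, ← hB.cfc_eq]
  have habs2 : cfc (fun s : ℝ => |s - t|) A = cfc (|·| : ℝ → ℝ) M := by
    conv_rhs => rw [hM1]
    exact cfc_comp' (|·| : ℝ → ℝ) (fun s : ℝ => s - t) A
      (contOn_of_finite' ((Matrix.finite_real_spectrum (A := A)).image _) _) (contOn_spectrum' A _) hAsa
  have hmatabs : mfun f (matAbs M) = cfc h1 A := by
    rw [hmfun (matAbs M) (by rw [habs]; exact hNps.1) f, habs, ← habs2]
    exact (cfc_comp' f (fun s : ℝ => |s - t|) A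
      (contOn_of_finite' ((Matrix.finite_real_spectrum (A := A)).image _) _) (contOn_spectrum' A _) hAsa).symm
  -- key positivity
  have hspec : ∀ i, 0 ≤ hAH.eigenvalues i := fun i => hA.eigenvalues_nonneg i
  set g : ℝ → ℝ := fun s => f t + C * (s - t) + h1 s with hgdef
  have hkey : (cfc (fun s => f s - g s) A).PosSemidef := by
    refine posSemidef_cfc_of_nonneg' hAH _ fun i => ?_
    exact sub_nonneg.mpr (hC _ (hspec i))
  have hsplit : cfc (fun s => f s - g s) A = cfc f A - cfc g A :=
    cfc_sub f g A (contOn_spectrum' A _) (contOn_spectrum' A _)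
  have hgA : cfc g A = ((f t : ℂ) • 1 + (C : ℂ) • M) + cfc h1 A := by
    have e1 : cfc g A = cfc (fun s => f t + C * (s - t)) A + cfc h1 A :=
      cfc_add A _ _ (contOn_spectrum' A _) (contOn_spectrum' A _)
    have e2 : cfc (fun s => f t + C * (s - t)) A
        = algebraMap ℝ _ (f t) + cfc (fun s : ℝ => C * (s - t)) A :=
      cfc_const_add (f t) _ A (contOn_spectrum' A _) hAsa
    have e3 : cfc (fun s : ℝ => C * (s - t)) A = C • cfc (fun s : ℝ => s - t) A :=
      cfc_const_mul C _ A (contOn_spectrum' A _)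
    rw [e1, e2, e3, halg, ← hM1, hsm, hsm]
  -- apply Φ and the quadratic form
  have hpos2 := (hΦpos _ (hsplit ▸ hkey)).dotProduct_mulVec_nonneg x
  have hq : star x ⬝ᵥ (Φ (cfc f A - cfc g A)) *ᵥ x
      = qf (Φ (cfc f A)) x - ((f t : ℂ) + qf (Φ (cfc h1 A)) x) := by
    rw [hgA]
    have hexp : Φ (cfc f A - (((f t : ℂ) • 1 + (C : ℂ) • M) + cfc h1 A))
        = Φ (cfc f A) - (((f t : ℂ) • Φ 1 + (C : ℂ) • Φ M) + Φ (cfc h1 A)) := by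
      simp only [map_sub, map_add, _root_.map_smul]
    have hΦM : Φ M = Φ A - (t : ℂ) • 1 := by
      rw [hMdef, map_sub, _root_.map_smul, hΦ1]
    have htc' : star x ⬝ᵥ Φ A *ᵥ x = (t : ℂ) := htc
    rw [hexp, hΦ1, hΦM]
    simp only [qf, Matrix.sub_mulVec, Matrix.add_mulVec, Matrix.smul_mulVec,
      dotProduct_sub, dotProduct_add, dotProduct_smul, Matrix.one_mulVec, hx, htc', htc,
      smul_eq_mul]
    ring
  rw [hq] at hpos2
  have hre := (Complex.nonneg_iff.mp hpos2).1
  simp only [Complex.sub_re, Complex.add_re, Complex.ofReal_re] at hre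
  have hgoal : f t ≤ (qf (Φ (cfc f A)) x).re - (qf (Φ (cfc h1 A)) x).re := by linarith
  rw [htc, ← hMdef, hmfun A hAH f, hmatabs]
  exact hgoal
end

section
/- Let H, K be n×n Hermitian complex matrices with eigenvalues arranged in decreasing order λ₁↓ ≥ ⋯ ≥ λ_n↓. Then λ_j↓(H) ≤ λ_j↓(K) for all j = 1,…,n if and only if there exists a unitary matrix U such that H ≤ U*KU in the Löwner order. -/
open Matrix
open scoped ComplexOrder

/-- Every Hermitian matrix decomposes with its sorted eigenvalues. -/
lemma unitary_decomp {n : ℕ} {A : Matrix (Fin n) (Fin n) ℂ} (hA : A.IsHermitian) :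
    ∃ W ∈ Matrix.unitaryGroup (Fin n) ℂ,
      A = W * diagonal ((↑) ∘ (hA.eigenvalues ∘ Tuple.sort hA.eigenvalues)) * star W := by
  classical
  set V : Matrix (Fin n) (Fin n) ℂ := (hA.eigenvectorUnitary : Matrix (Fin n) (Fin n) ℂ) with hVdef
  have hVmem : V ∈ Matrix.unitaryGroup (Fin n) ℂ := hA.eigenvectorUnitary.2
  set σ := Tuple.sort hA.eigenvalues with hσ
  refine ⟨V.submatrix id σ, ?_, ?_⟩
  · rw [Matrix.mem_unitaryGroup_iff']
    rw [Matrix.star_eq_conjTranspose, conjTranspose_submatrix,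
      ← Matrix.submatrix_mul _ _ σ id σ Function.bijective_id,
      ← Matrix.star_eq_conjTranspose, Matrix.mem_unitaryGroup_iff'.mp hVmem,
      submatrix_one _ σ.injective]
  · have hdiag : diagonal ((↑) ∘ (hA.eigenvalues ∘ σ) : Fin n → ℂ)
        = (diagonal ((↑) ∘ hA.eigenvalues : Fin n → ℂ)).submatrix σ σ := by
      rw [Matrix.submatrix_diagonal _ σ σ.injective]
      rfl
    rw [hdiag, Matrix.star_eq_conjTranspose, conjTranspose_submatrix,
      ← Matrix.submatrix_mul V _ id σ σ σ.bijective,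
      ← Matrix.submatrix_mul _ Vᴴ id σ id σ.bijective, submatrix_id_id]
    exact hA.spectral_theorem

lemma qf_conj_diag {n : ℕ} (V : Matrix (Fin n) (Fin n) ℂ) (d : Fin n → ℝ) (x : Fin n → ℂ) :
    (star x ⬝ᵥ ((V * diagonal ((↑) ∘ d) * star V) *ᵥ x)).re
      = ∑ j, d j * Complex.normSq ((star V *ᵥ x) j) := by
  have hsc : star (star V *ᵥ x) = star x ᵥ* V := by
    rw [star_mulVec, Matrix.star_eq_conjTranspose, conjTranspose_conjTranspose]
  rw [← Matrix.mulVec_mulVec, Matrix.dotProduct_mulVec, ← Matrix.vecMul_vecMul, ← hsc]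
  rw [show star (star V *ᵥ x) ᵥ* diagonal ((↑) ∘ d) ⬝ᵥ (star V *ᵥ x)
      = ∑ j, (star ((star V *ᵥ x) j) * (d j : ℂ)) * (star V *ᵥ x) j from by
    simp [dotProduct, vecMul_diagonal, Function.comp]]
  rw [Complex.re_sum]
  refine Finset.sum_congr rfl fun j _ => ?_
  generalize (star V *ᵥ x) j = z
  have : star z * (d j : ℂ) * z = ((d j * Complex.normSq z : ℝ) : ℂ) := by
    rw [Complex.ofReal_mul, Complex.star_def, show (starRingEnd ℂ) z * (d j : ℂ) * z
      = (d j : ℂ) * (z * (starRingEnd ℂ) z) from by ring, Complex.mul_conj]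
  rw [this, Complex.ofReal_re]

lemma re_dot_self {n : ℕ} (x : Fin n → ℂ) :
    (star x ⬝ᵥ x).re = ∑ j, Complex.normSq (x j) := by
  rw [show star x ⬝ᵥ x = ∑ j, ((Complex.normSq (x j) : ℝ) : ℂ) from by
    simp [dotProduct, Complex.normSq_eq_conj_mul_self, Complex.star_def]]
  rw [Complex.re_sum]
  simp

lemma coord_norm_conserved {n : ℕ} {V : Matrix (Fin n) (Fin n) ℂ}
    (hV : V ∈ Matrix.unitaryGroup (Fin n) ℂ) (x : Fin n → ℂ) :
    ∑ j, Complex.normSq ((star V *ᵥ x) j) = ∑ j, Complex.normSq (x j) := by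
  have h2 : V * star V = 1 := Matrix.mem_unitaryGroup_iff.mp hV
  have := qf_conj_diag V (fun _ => 1) x
  rw [show diagonal ((↑) ∘ (fun _ : Fin n => (1:ℝ)) : Fin n → ℂ) = (1 : Matrix (Fin n) (Fin n) ℂ)
      from by rw [show ((↑) ∘ (fun _ : Fin n => (1:ℝ)) : Fin n → ℂ) = fun _ => 1 from rfl,
        diagonal_one]] at this
  rw [mul_one, h2, one_mulVec, re_dot_self] at this
  simpa using this.symm

lemma coord_zero_of_mem_span {n : ℕ} {V : Matrix (Fin n) (Fin n) ℂ}
    (hV : star V * V = 1) (s : Set (Fin n)) {x : Fin n → ℂ}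
    (hx : x ∈ Submodule.span ℂ ((fun j => V *ᵥ Pi.single j 1) '' s)) {j : Fin n} (hj : j ∉ s) :
    (star V *ᵥ x) j = 0 := by
  have hle : Submodule.span ℂ ((fun j => V *ᵥ Pi.single j 1) '' s)
      ≤ LinearMap.ker ((LinearMap.proj j).comp (Matrix.mulVecLin (star V))) := by
    rw [Submodule.span_le]
    rintro - ⟨k, hk, rfl⟩
    simp only [SetLike.mem_coe, LinearMap.mem_ker, LinearMap.comp_apply, mulVecLin_apply,
      LinearMap.proj_apply, mulVec_mulVec, hV, one_mulVec]
    exact Pi.single_eq_of_ne (by rintro rfl; exact hj hk) 1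
  exact hle hx

lemma span_cols_finrank {n : ℕ} {V : Matrix (Fin n) (Fin n) ℂ}
    (hV : star V * V = 1) (s : Finset (Fin n)) :
    Module.finrank ℂ (Submodule.span ℂ
      ((fun j => V *ᵥ Pi.single j 1) '' (s : Set (Fin n)))) = s.card := by
  classical
  have hinj : Function.Injective (Matrix.mulVecLin V) := by
    intro a b hab
    have : star V *ᵥ (V *ᵥ a) = star V *ᵥ (V *ᵥ b) := by
      simpa [mulVecLin_apply] using congrArg (star V *ᵥ ·) hab
    simpa [mulVec_mulVec, hV, one_mulVec] using this
  have hli : LinearIndependent ℂ (fun j : Fin n => V *ᵥ Pi.single j 1) := by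
    have hb : LinearIndependent ℂ (fun j : Fin n => (Pi.single j 1 : Fin n → ℂ)) := by
      have hb0 := (Pi.basisFun ℂ (Fin n)).linearIndependent
      have : ⇑(Pi.basisFun ℂ (Fin n)) = fun j : Fin n => (Pi.single j 1 : Fin n → ℂ) :=
        funext fun j => Pi.basisFun_apply ℂ (Fin n) j
      rwa [this] at hb0
    exact hb.map' (Matrix.mulVecLin V) (LinearMap.ker_eq_bot.mpr hinj)
  have hli' : LinearIndependent ℂ (fun j : (s : Set (Fin n)) => V *ᵥ Pi.single (j : Fin n) 1) :=
    hli.comp _ Subtype.val_injective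
  have himg : ((fun j => V *ᵥ Pi.single j 1) '' (s : Set (Fin n)))
      = Set.range (fun j : (s : Set (Fin n)) => V *ᵥ Pi.single (j : Fin n) 1) :=
    Set.image_eq_range _ _
  rw [himg, finrank_span_eq_card hli']
  simp

/-- Weyl's monotonicity principle. -/
lemma weyl_mono {n : ℕ} {V W : Matrix (Fin n) (Fin n) ℂ}
    (hV : V ∈ Matrix.unitaryGroup (Fin n) ℂ) (hW : W ∈ Matrix.unitaryGroup (Fin n) ℂ)
    {d m : Fin n → ℝ} (hd : Monotone d) (hm : Monotone m)
    (h : Loewner (V * diagonal ((↑) ∘ d) * star V) (W * diagonal ((↑) ∘ m) * star W))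
    (i : Fin n) : d i ≤ m i := by
  classical
  have hV' : star V * V = 1 := Matrix.mem_unitaryGroup_iff'.mp hV
  have hW' : star W * W = 1 := Matrix.mem_unitaryGroup_iff'.mp hW
  set S₁ := Submodule.span ℂ
    ((fun j => V *ᵥ Pi.single j 1) '' ((Finset.Ici i : Finset (Fin n)) : Set (Fin n))) with hS₁
  set S₂ := Submodule.span ℂ
    ((fun j => W *ᵥ Pi.single j 1) '' ((Finset.Iic i : Finset (Fin n)) : Set (Fin n))) with hS₂
  have hr1 : Module.finrank ℂ S₁ = n - (i : ℕ) := by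
    rw [hS₁, span_cols_finrank hV', Fin.card_Ici]
  have hr2 : Module.finrank ℂ S₂ = (i : ℕ) + 1 := by
    rw [hS₂, span_cols_finrank hW', Fin.card_Iic]
  have hinf : S₁ ⊓ S₂ ≠ ⊥ := by
    intro hbot
    have hsum := Submodule.finrank_sup_add_finrank_inf_eq S₁ S₂
    rw [hbot, finrank_bot, add_zero, hr1, hr2] at hsum
    have hle := Submodule.finrank_le (S₁ ⊔ S₂)
    rw [Module.finrank_fintype_fun_eq_card, Fintype.card_fin] at hle
    have := i.isLt
    omega
  obtain ⟨x, hxmem, hx0⟩ := Submodule.exists_mem_ne_zero_of_ne_bot hinf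
  obtain ⟨hx1, hx2⟩ := Submodule.mem_inf.mp hxmem
  -- the norm
  set N := ∑ j, Complex.normSq (x j) with hN
  have hNpos : 0 < N := by
    obtain ⟨k, hk⟩ := Function.ne_iff.mp hx0
    exact Finset.sum_pos' (fun j _ => Complex.normSq_nonneg _)
      ⟨k, Finset.mem_univ k, Complex.normSq_pos.mpr hk⟩
  -- bound on the V side
  have hbound1 : d i * N ≤ (star x ⬝ᵥ ((V * diagonal ((↑) ∘ d) * star V) *ᵥ x)).re := by
    rw [qf_conj_diag, hN, ← coord_norm_conserved hV x, Finset.mul_sum]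
    refine Finset.sum_le_sum fun j _ => ?_
    by_cases hj : i ≤ j
    · exact mul_le_mul_of_nonneg_right (hd hj) (Complex.normSq_nonneg _)
    · have : (star V *ᵥ x) j = 0 := coord_zero_of_mem_span hV' _ hx1
        (by simpa using hj)
      simp [this]
  have hbound2 : (star x ⬝ᵥ ((W * diagonal ((↑) ∘ m) * star W) *ᵥ x)).re ≤ m i * N := by
    rw [qf_conj_diag, hN, ← coord_norm_conserved hW x, Finset.mul_sum]
    refine Finset.sum_le_sum fun j _ => ?_
    by_cases hj : j ≤ i
    · exact mul_le_mul_of_nonneg_right (hm hj) (Complex.normSq_nonneg _)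
    · have : (star W *ᵥ x) j = 0 := coord_zero_of_mem_span hW' _ hx2
        (by simpa using hj)
      simp [this]
  -- Loewner gives the middle inequality
  have hmid : (star x ⬝ᵥ ((V * diagonal ((↑) ∘ d) * star V) *ᵥ x)).re
      ≤ (star x ⬝ᵥ ((W * diagonal ((↑) ∘ m) * star W) *ᵥ x)).re := by
    have hpsd : (0 : ℂ) ≤ star x ⬝ᵥ ((W * diagonal ((↑) ∘ m) * star W
        - V * diagonal ((↑) ∘ d) * star V) *ᵥ x) := h.dotProduct_mulVec_nonneg x
    rw [Matrix.sub_mulVec, dotProduct_sub] at hpsd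
    have := (Complex.le_def.mp hpsd).1
    simp only [Complex.zero_re, Complex.sub_re] at this
    linarith
  have : d i * N ≤ m i * N := le_trans hbound1 (le_trans hmid hbound2)
  exact le_of_mul_le_mul_right this hNpos


set_option maxHeartbeats 1600000 in
/-- `λ_j↓(H) ≤ λ_j↓(K)` for all `j` iff `H ≤ U* K U` for some unitary `U`. -/
theorem eigenvalue_le_iff_unitary {n : ℕ} (H K : Matrix (Fin n) (Fin n) ℂ)
    (hH : H.IsHermitian) (hK : K.IsHermitian) :
    (∀ j : Fin n, lkth H j ≤ lkth K j) ↔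
      ∃ U ∈ Matrix.unitaryGroup (Fin n) ℂ, Loewner H (star U * K * U) := by
  classical
  obtain ⟨W₁, hW₁, hHdec⟩ := unitary_decomp hH
  obtain ⟨W₂, hW₂, hKdec⟩ := unitary_decomp hK
  set dH := hH.eigenvalues ∘ Tuple.sort hH.eigenvalues with hdH
  set dK := hK.eigenvalues ∘ Tuple.sort hK.eigenvalues with hdKdef
  have hlkH : ∀ j : Fin n, lkth H j = dH j.rev := by
    intro j; unfold lkth; rw [dif_pos hH]
  have hlkK : ∀ j : Fin n, lkth K j = dK j.rev := by
    intro j; unfold lkth; rw [dif_pos hK]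
  constructor
  · intro hle
    have hle' : ∀ k : Fin n, dH k ≤ dK k := by
      intro k
      have := hle k.rev
      rwa [hlkH, hlkK, Fin.rev_rev] at this
    refine ⟨W₂ * star W₁, mul_mem hW₂ (Unitary.star_mem hW₁), ?_⟩
    have hstar : star (W₂ * star W₁) = W₁ * star W₂ := by
      rw [StarMul.star_mul, star_star]
    have hconj : star (W₂ * star W₁) * K * (W₂ * star W₁)
        = W₁ * diagonal ((↑) ∘ dK) * star W₁ := by
      rw [hstar, hKdec]
      have h1 : star W₂ * W₂ = 1 := Matrix.mem_unitaryGroup_iff'.mp hW₂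
      rw [show W₁ * star W₂ * (W₂ * diagonal ((↑) ∘ dK) * star W₂) * (W₂ * star W₁)
          = W₁ * ((star W₂ * W₂) * (diagonal ((↑) ∘ dK) * ((star W₂ * W₂) * star W₁)))
          from by simp only [mul_assoc], h1, one_mul, one_mul, ← mul_assoc]
    show (star (W₂ * star W₁) * K * (W₂ * star W₁) - H).PosSemidef
    rw [hconj, hHdec]
    have hdiff : W₁ * diagonal ((↑) ∘ dK) * star W₁ - W₁ * diagonal ((↑) ∘ dH) * star W₁
        = W₁ * (diagonal ((↑) ∘ dK) - diagonal ((↑) ∘ dH)) * star W₁ := by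
      rw [mul_sub, sub_mul]
    rw [hdiff, Matrix.diagonal_sub]
    have hpsd : (diagonal (((↑) ∘ dK : Fin n → ℂ) - ((↑) ∘ dH))).PosSemidef := by
      rw [Matrix.posSemidef_diagonal_iff]
      intro k
      have : ((dK k : ℂ) - (dH k : ℂ)) = ((dK k - dH k : ℝ) : ℂ) := by push_cast; ring
      rw [Pi.sub_apply, Function.comp_apply, Function.comp_apply, this]
      rw [Complex.zero_le_real]
      linarith [hle' k]
    have := hpsd.mul_mul_conjTranspose_same W₁
    rwa [← Matrix.star_eq_conjTranspose] at this
  · rintro ⟨U, hU, hL⟩ j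
    have hM : star U * K * U = (star U * W₂) * diagonal ((↑) ∘ dK) * star (star U * W₂) := by
      rw [hKdec, StarMul.star_mul, star_star]
      simp only [mul_assoc]
    have hweyl := weyl_mono hW₁ (mul_mem (Unitary.star_mem hU) hW₂)
      (Tuple.monotone_sort hH.eigenvalues) (Tuple.monotone_sort hK.eigenvalues)
      (show Loewner (W₁ * diagonal ((↑) ∘ dH) * star W₁)
        ((star U * W₂) * diagonal ((↑) ∘ dK) * star (star U * W₂)) from by
        rw [← hHdec, ← hM]; exact hL) j.rev
    rw [hlkH, hlkK]
    exact hweyl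
end

section
/- Let f:[0,∞)→ℝ be superquadratic, concave, and decreasing, let Φ: M_n(ℂ) → M_n(ℂ) be a unital positive linear map, and let A be positive semi-definite. Then for each k = 1,…,n: λ_k↓(f(Φ(A))) ≤ λ_k↓(Φ(f(A))) − f(λ₁(A) − λ_n(A)). -/
open Matrix
open scoped ComplexOrder

open Submodule

variable {n : ℕ}


lemma dot_star_self (x : Fin n → ℂ) : star x ⬝ᵥ x = ((∑ i, ‖x i‖^2 : ℝ) : ℂ) := by
  simp only [dotProduct, Complex.ofReal_sum, Pi.star_apply]
  congr 1; ext i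
  rw [Complex.star_def, ← Complex.normSq_eq_conj_mul_self, Complex.normSq_eq_norm_sq]

lemma dot_star_self_re_nonneg (x : Fin n → ℂ) : 0 ≤ (star x ⬝ᵥ x).re := by
  rw [dot_star_self, Complex.ofReal_re]
  exact Finset.sum_nonneg fun i _ => sq_nonneg ‖x i‖

lemma dot_star_self_re_pos {x : Fin n → ℂ} (hx : x ≠ 0) : 0 < (star x ⬝ᵥ x).re := by
  rw [dot_star_self, Complex.ofReal_re]
  have : ∃ i, x i ≠ 0 := by
    by_contra h; push_neg at h; exact hx (funext h)
  obtain ⟨i, hi⟩ := this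
  refine Finset.sum_pos' (fun j _ => sq_nonneg _) ⟨i, Finset.mem_univ i, ?_⟩
  have : 0 < ‖x i‖ := norm_pos_iff.mpr hi
  positivity

/-- nonzero common vector in two big subspaces -/
lemma exists_ne_zero_mem_inf (V W : Submodule ℂ (Fin n → ℂ))
    (h : n < Module.finrank ℂ V + Module.finrank ℂ W) :
    ∃ x : Fin n → ℂ, x ≠ 0 ∧ x ∈ V ∧ x ∈ W := by
  have hfin : Module.finrank ℂ (V ⊔ W : Submodule ℂ (Fin n → ℂ)) ≤ n := by
    simpa [Module.finrank_pi] using Submodule.finrank_le (V ⊔ W)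
  have h2 := Submodule.finrank_sup_add_finrank_inf_eq V W
  have hpos : 0 < Module.finrank ℂ (V ⊓ W : Submodule ℂ (Fin n → ℂ)) := by omega
  rw [Module.finrank_pos_iff] at hpos
  obtain ⟨⟨x, hx⟩, hx0⟩ := exists_ne (0 : (V ⊓ W : Submodule ℂ (Fin n → ℂ)))
  refine ⟨x, ?_, (Submodule.mem_inf.mp hx).1, (Submodule.mem_inf.mp hx).2⟩
  simpa [Submodule.mk_eq_zero] using hx0


lemma sum_dotProduct' {ι : Type*} (s : Finset ι) (f : ι → Fin n → ℂ) (w : Fin n → ℂ) :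
    (∑ i ∈ s, f i) ⬝ᵥ w = ∑ i ∈ s, f i ⬝ᵥ w := by
  simp only [dotProduct, Finset.sum_apply, Finset.sum_mul]
  exact Finset.sum_comm

lemma dotProduct_sum' {ι : Type*} (s : Finset ι) (w : Fin n → ℂ) (f : ι → Fin n → ℂ) :
    w ⬝ᵥ (∑ i ∈ s, f i) = ∑ i ∈ s, w ⬝ᵥ f i := by
  simp only [dotProduct, Finset.sum_apply, Finset.mul_sum]
  exact Finset.sum_comm


variable {M : Matrix (Fin n) (Fin n) ℂ} {v : Fin n → Fin n → ℂ} {μ : Fin n → ℝ}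
  {T : Finset (Fin n)}

lemma mem_span_rep {x : Fin n → ℂ} (hx : x ∈ span ℂ (v '' ↑T)) :
    ∃ c : Fin n → ℂ, x = ∑ i ∈ T, c i • v i := by
  rw [Set.image_eq_range, mem_span_range_iff_exists_fun] at hx
  obtain ⟨c, hc⟩ := hx
  classical
  refine ⟨fun i => if h : (i : Fin n) ∈ (↑T : Set (Fin n)) then c ⟨i, h⟩ else 0, ?_⟩
  rw [← hc, ← Finset.sum_finset_coe
    (fun i => (if h : (i : Fin n) ∈ (↑T : Set (Fin n)) then c ⟨i, h⟩ else 0) • v i) T]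
  refine (Finset.sum_congr rfl fun i _ => ?_).symm
  rw [dif_pos i.2]

lemma quad_rep (hv : ∀ i j, star (v i) ⬝ᵥ v j = if i = j then 1 else 0)
    (hMv : ∀ i, M *ᵥ v i = (μ i : ℂ) • v i) (c : Fin n → ℂ) :
    star (∑ i ∈ T, c i • v i) ⬝ᵥ M *ᵥ (∑ i ∈ T, c i • v i)
      = ∑ i ∈ T, ((μ i : ℂ) * ((‖c i‖^2 : ℝ) : ℂ)) := by
  have hM : M *ᵥ (∑ i ∈ T, c i • v i) = ∑ i ∈ T, (c i * (μ i : ℂ)) • v i := by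
    rw [← M.mulVecLin_apply, map_sum]
    refine Finset.sum_congr rfl fun i _ => ?_
    rw [LinearMap.map_smul, M.mulVecLin_apply, hMv i, smul_smul, mul_comm]
  rw [hM, star_sum]
  simp only [star_smul]
  rw [sum_dotProduct']
  refine Finset.sum_congr rfl fun i hi => ?_
  rw [smul_dotProduct, dotProduct_sum']
  rw [Finset.sum_congr rfl fun j _ => dotProduct_smul _ _ _]
  rw [Finset.sum_congr rfl fun j _ => congrArg _ (hv i j)]
  simp only [smul_eq_mul, mul_ite, mul_one, mul_zero, Finset.sum_ite_eq, if_pos hi]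
  rw [show star (c i) * (c i * (μ i : ℂ)) = (star (c i) * c i) * (μ i : ℂ) from by ring]
  rw [RCLike.star_def, ← Complex.normSq_eq_conj_mul_self, mul_comm]
  congr 1
  rw [Complex.normSq_eq_norm_sq]

lemma norm_rep (hv : ∀ i j, star (v i) ⬝ᵥ v j = if i = j then 1 else 0) (c : Fin n → ℂ) :
    star (∑ i ∈ T, c i • v i) ⬝ᵥ (∑ i ∈ T, c i • v i)
      = ∑ i ∈ T, (((‖c i‖^2 : ℝ) : ℂ)) := by
  have := quad_rep (M := 1) (μ := fun _ => 1) hv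
    (fun i => by rw [Matrix.one_mulVec]; simp) (T := T) c
  rw [Matrix.one_mulVec] at this
  simpa using this



section SpanQuad
variable {M : Matrix (Fin n) (Fin n) ℂ} {v : Fin n → Fin n → ℂ} {μ : Fin n → ℝ}
  {T : Finset (Fin n)}

variable {M : Matrix (Fin n) (Fin n) ℂ} {v : Fin n → Fin n → ℂ} {μ : Fin n → ℝ}
  {T : Finset (Fin n)}

lemma lin_indep (hv : ∀ i j, star (v i) ⬝ᵥ v j = if i = j then 1 else 0) :
    LinearIndependent ℂ v := by
  rw [Fintype.linearIndependent_iff]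
  intro g hg i
  have h2 : star (v i) ⬝ᵥ (∑ j, g j • v j) = g i := by
    rw [dotProduct_sum' Finset.univ (star (v i)) (fun j => g j • v j)]
    rw [Finset.sum_congr rfl fun j _ => dotProduct_smul _ _ _]
    rw [Finset.sum_congr rfl fun j _ => congrArg _ (hv i j)]
    simp
  rw [hg] at h2
  simpa using h2.symm

lemma finrank_span_T (hv : ∀ i j, star (v i) ⬝ᵥ v j = if i = j then 1 else 0) :
    Module.finrank ℂ (span ℂ (v '' ↑T)) = T.card := by
  have hli : LinearIndependent ℂ (fun i : (↑T : Set (Fin n)) => v i) :=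
    (lin_indep hv).comp _ Subtype.val_injective
  rw [Set.image_eq_range, finrank_span_eq_card hli]
  simp

lemma span_quad_ge (hv : ∀ i j, star (v i) ⬝ᵥ v j = if i = j then 1 else 0)
    (hMv : ∀ i, M *ᵥ v i = (μ i : ℂ) • v i) (a : ℝ) (ha : ∀ i ∈ T, a ≤ μ i)
    {x : Fin n → ℂ} (hx : x ∈ span ℂ (v '' ↑T)) :
    a * (star x ⬝ᵥ x).re ≤ (star x ⬝ᵥ M *ᵥ x).re := by
  obtain ⟨c, rfl⟩ := mem_span_rep hx
  rw [quad_rep hv hMv c, norm_rep hv c, Complex.re_sum, Complex.re_sum]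
  have h1 : ∀ i, ((μ i : ℂ) * ((‖c i‖^2 : ℝ) : ℂ)).re = μ i * ‖c i‖^2 := by
    intro i; rw [← Complex.ofReal_mul, Complex.ofReal_re]
  have h2 : ∀ i, (((‖c i‖^2 : ℝ) : ℂ)).re = ‖c i‖^2 := fun i => Complex.ofReal_re _
  rw [Finset.sum_congr rfl fun i _ => h1 i, Finset.sum_congr rfl fun i _ => h2 i,
    Finset.mul_sum]
  exact Finset.sum_le_sum fun i hi =>
    mul_le_mul_of_nonneg_right (ha i hi) (sq_nonneg _)

lemma span_quad_le (hv : ∀ i j, star (v i) ⬝ᵥ v j = if i = j then 1 else 0)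
    (hMv : ∀ i, M *ᵥ v i = (μ i : ℂ) • v i) (a : ℝ) (ha : ∀ i ∈ T, μ i ≤ a)
    {x : Fin n → ℂ} (hx : x ∈ span ℂ (v '' ↑T)) :
    (star x ⬝ᵥ M *ᵥ x).re ≤ a * (star x ⬝ᵥ x).re := by
  obtain ⟨c, rfl⟩ := mem_span_rep hx
  rw [quad_rep hv hMv c, norm_rep hv c, Complex.re_sum, Complex.re_sum]
  have h1 : ∀ i, ((μ i : ℂ) * ((‖c i‖^2 : ℝ) : ℂ)).re = μ i * ‖c i‖^2 := by
    intro i; rw [← Complex.ofReal_mul, Complex.ofReal_re]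
  have h2 : ∀ i, (((‖c i‖^2 : ℝ) : ℂ)).re = ‖c i‖^2 := fun i => Complex.ofReal_re _
  rw [Finset.sum_congr rfl fun i _ => h1 i, Finset.sum_congr rfl fun i _ => h2 i,
    Finset.mul_sum]
  exact Finset.sum_le_sum fun i hi =>
    mul_le_mul_of_nonneg_right (ha i hi) (sq_nonneg _)

end SpanQuad

lemma le_of_subspaces (H : Matrix (Fin n) (Fin n) ℂ) (V W : Submodule ℂ (Fin n → ℂ))
    (a b : ℝ)
    (h1 : ∀ x ∈ V, a * (star x ⬝ᵥ x).re ≤ (star x ⬝ᵥ H *ᵥ x).re)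
    (h2 : ∀ x ∈ W, (star x ⬝ᵥ H *ᵥ x).re ≤ b * (star x ⬝ᵥ x).re)
    (hdim : n < Module.finrank ℂ V + Module.finrank ℂ W) : a ≤ b := by
  obtain ⟨x, hx0, hxV, hxW⟩ := exists_ne_zero_mem_inf V W hdim
  have hr : 0 < (star x ⬝ᵥ x).re := dot_star_self_re_pos hx0
  have := (h1 x hxV).trans (h2 x hxW)
  exact le_of_mul_le_mul_right this hr


section Herm
variable {H : Matrix (Fin n) (Fin n) ℂ} (hH : H.IsHermitian)

lemma eigvec_dot (i j : Fin n) :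
    star (⇑(hH.eigenvectorBasis i) : Fin n → ℂ) ⬝ᵥ (⇑(hH.eigenvectorBasis j) : Fin n → ℂ)
      = if i = j then 1 else 0 := by
  have h := hH.eigenvectorBasis.orthonormal
  rw [orthonormal_iff_ite] at h
  have h2 := h i j
  rw [EuclideanSpace.inner_eq_star_dotProduct, dotProduct_comm] at h2
  exact h2

lemma my_cfc_mulVec (f : ℝ → ℝ) (j : Fin n) :
    hH.cfc f *ᵥ ⇑(hH.eigenvectorBasis j)
      = ((f (hH.eigenvalues j) : ℝ) : ℂ) • ⇑(hH.eigenvectorBasis j) := by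
  rw [Matrix.IsHermitian.cfc, Unitary.conjStarAlgAut_apply, ← Matrix.mulVec_mulVec, ← Matrix.mulVec_mulVec,
    hH.star_eigenvectorUnitary_mulVec, Matrix.diagonal_mulVec_single]
  have : Pi.single (M := fun _ : Fin n => ℂ) j ((RCLike.ofReal ∘ f ∘ hH.eigenvalues) j * 1)
      = ((f (hH.eigenvalues j) : ℝ) : ℂ) • Pi.single (M := fun _ : Fin n => ℂ) j 1 := by
    funext i
    rcases eq_or_ne i j with rfl | hij
    · simp
    · simp [Pi.single_eq_of_ne hij]
  rw [this, Matrix.mulVec_smul, hH.eigenvectorUnitary_mulVec]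

lemma my_cfc_isHermitian (f : ℝ → ℝ) : (hH.cfc f).IsHermitian := by
  rw [Matrix.IsHermitian.cfc, Unitary.conjStarAlgAut_apply, Matrix.star_eq_conjTranspose]
  apply Matrix.isHermitian_mul_mul_conjTranspose
  rw [Matrix.isHermitian_diagonal_iff]
  intro i
  simp [_root_.IsSelfAdjoint, Complex.star_def, Complex.conj_ofReal]

lemma my_cfc_posSemidef (f : ℝ → ℝ) (h : ∀ i, 0 ≤ f (hH.eigenvalues i)) :
    (hH.cfc f).PosSemidef := by
  rw [Matrix.IsHermitian.cfc, Unitary.conjStarAlgAut_apply, Matrix.star_eq_conjTranspose]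
  exact (Matrix.posSemidef_diagonal_iff.mpr fun i => by
    simpa using Complex.zero_le_real.mpr (h i)).mul_mul_conjTranspose_same _

lemma my_cfc_sub (f g : ℝ → ℝ) :
    hH.cfc f - hH.cfc g = hH.cfc (fun r => f r - g r) := by
  rw [Matrix.IsHermitian.cfc, Matrix.IsHermitian.cfc, Matrix.IsHermitian.cfc]
  simp only [Unitary.conjStarAlgAut_apply]
  have : diagonal (RCLike.ofReal ∘ (fun r => f r - g r) ∘ hH.eigenvalues)
      = diagonal ((RCLike.ofReal ∘ f ∘ hH.eigenvalues) : Fin n → ℂ)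
        - diagonal (RCLike.ofReal ∘ g ∘ hH.eigenvalues) := by
    ext i j
    rcases eq_or_ne i j with rfl | hij
    · simp
    · simp [diagonal_apply_ne _ hij]
  rw [this, mul_sub, sub_mul]

lemma my_cfc_affine (a b : ℝ) :
    hH.cfc (fun r => a * r + b) = (a : ℂ) • H + (b : ℂ) • 1 := by
  rw [Matrix.IsHermitian.cfc, Unitary.conjStarAlgAut_apply]
  have hd : diagonal (RCLike.ofReal ∘ (fun r => a * r + b) ∘ hH.eigenvalues)
      = (a : ℂ) • diagonal ((RCLike.ofReal ∘ hH.eigenvalues) : Fin n → ℂ)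
        + (b : ℂ) • (1 : Matrix (Fin n) (Fin n) ℂ) := by
    ext i j
    rcases eq_or_ne i j with rfl | hij
    · simp only [diagonal_apply_eq, Matrix.add_apply, Matrix.smul_apply, Matrix.one_apply_eq,
        Function.comp_apply, smul_eq_mul, mul_one]
      rw [RCLike.ofReal_add, RCLike.ofReal_mul]
      exact rfl
    · simp [diagonal_apply_ne _ hij, Matrix.one_apply_ne hij]
  rw [hd, mul_add, add_mul, mul_smul_comm, smul_mul_assoc, mul_smul_comm, smul_mul_assoc,
    mul_one, (Matrix.mem_unitaryGroup_iff).mp (hH.eigenvectorUnitary).2]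
  congr 1
  conv_rhs => rw [hH.spectral_theorem, Unitary.conjStarAlgAut_apply]

end Herm

section Core
variable {H : Matrix (Fin n) (Fin n) ℂ}

lemma lkth_ge_core (hH : H.IsHermitian) (V : Submodule ℂ (Fin n → ℂ)) (c : ℝ) (k : Fin n)
    (hdim : (k : ℕ) + 1 ≤ Module.finrank ℂ V)
    (hq : ∀ x ∈ V, c * (star x ⬝ᵥ x).re ≤ (star x ⬝ᵥ H *ᵥ x).re) :
    c ≤ (hH.eigenvalues ∘ Tuple.sort hH.eigenvalues) k.rev := by
  classical
  set σ := Tuple.sort hH.eigenvalues with hσ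
  set v : Fin n → Fin n → ℂ := fun i => ⇑(hH.eigenvectorBasis i) with hv
  set T : Finset (Fin n) := (Finset.Iic k.rev).image σ with hT
  set W := span ℂ (v '' ↑T) with hW
  have hvd : ∀ i j, star (v i) ⬝ᵥ v j = if i = j then 1 else 0 := eigvec_dot hH
  have hcard : T.card = (k.rev : ℕ) + 1 := by
    rw [hT, Finset.card_image_of_injective _ (Equiv.injective σ), Fin.card_Iic]
  have hfr : Module.finrank ℂ W = (k.rev : ℕ) + 1 := by
    rw [hW, finrank_span_T hvd, hcard]
  have hWq : ∀ x ∈ W, (star x ⬝ᵥ H *ᵥ x).re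
      ≤ ((hH.eigenvalues ∘ σ) k.rev) * (star x ⬝ᵥ x).re := by
    intro x hx
    refine span_quad_le hvd (fun i => hH.mulVec_eigenvectorBasis i) _ ?_ hx
    intro i hi
    rw [hT] at hi
    obtain ⟨p, hp, rfl⟩ := Finset.mem_image.mp hi
    exact Tuple.monotone_sort hH.eigenvalues (Finset.mem_Iic.mp hp)
  refine le_of_subspaces H V W c _ hq hWq ?_
  rw [hfr]
  have := k.is_lt
  have hkrev : (k.rev : ℕ) = n - 1 - k := by rw [Fin.val_rev]; omega
  omega

lemma lkth_le_core (hH : H.IsHermitian) (V : Submodule ℂ (Fin n → ℂ)) (c : ℝ) (k : Fin n)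
    (hdim : n - (k : ℕ) ≤ Module.finrank ℂ V)
    (hq : ∀ x ∈ V, (star x ⬝ᵥ H *ᵥ x).re ≤ c * (star x ⬝ᵥ x).re) :
    (hH.eigenvalues ∘ Tuple.sort hH.eigenvalues) k.rev ≤ c := by
  classical
  set σ := Tuple.sort hH.eigenvalues with hσ
  set v : Fin n → Fin n → ℂ := fun i => ⇑(hH.eigenvectorBasis i) with hv
  set T : Finset (Fin n) := (Finset.Ici k.rev).image σ with hT
  set W := span ℂ (v '' ↑T) with hW
  have hvd : ∀ i j, star (v i) ⬝ᵥ v j = if i = j then 1 else 0 := eigvec_dot hH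
  have hcard : T.card = n - (k.rev : ℕ) := by
    rw [hT, Finset.card_image_of_injective _ (Equiv.injective σ), Fin.card_Ici]
  have hfr : Module.finrank ℂ W = n - (k.rev : ℕ) := by
    rw [hW, finrank_span_T hvd, hcard]
  have hWq : ∀ x ∈ W, ((hH.eigenvalues ∘ σ) k.rev) * (star x ⬝ᵥ x).re
      ≤ (star x ⬝ᵥ H *ᵥ x).re := by
    intro x hx
    refine span_quad_ge hvd (fun i => hH.mulVec_eigenvectorBasis i) _ ?_ hx
    intro i hi
    rw [hT] at hi
    obtain ⟨p, hp, rfl⟩ := Finset.mem_image.mp hi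
    exact Tuple.monotone_sort hH.eigenvalues (Finset.mem_Ici.mp hp)
  refine le_of_subspaces H W V _ c hWq hq ?_
  rw [hfr]
  have := k.is_lt
  have hkrev : (k.rev : ℕ) = n - 1 - k := by rw [Fin.val_rev]; omega
  omega

end Core

section Phi
variable (Φ : Matrix (Fin n) (Fin n) ℂ →ₗ[ℂ] Matrix (Fin n) (Fin n) ℂ)

lemma smul_one_isHermitian (c : ℝ) :
    (((c : ℂ) • (1 : Matrix (Fin n) (Fin n) ℂ))).IsHermitian := by
  unfold Matrix.IsHermitian
  rw [conjTranspose_smul, conjTranspose_one, Complex.star_def, Complex.conj_ofReal]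

lemma phi_hermitian (hΦ1 : Φ 1 = 1)
    (hΦpos : ∀ A : Matrix (Fin n) (Fin n) ℂ, A.PosSemidef → (Φ A).PosSemidef)
    {X : Matrix (Fin n) (Fin n) ℂ} (hX : X.IsHermitian) : (Φ X).IsHermitian := by
  classical
  set c : ℝ := ∑ i, |hX.eigenvalues i| with hc
  have h1 : ((1 : ℝ) • X + (c : ℂ) • 1).PosSemidef := by
    have := my_cfc_affine hX 1 c
    rw [show ((1:ℝ):ℂ) = (1:ℂ) by norm_num, one_smul] at this
    rw [one_smul, ← this]
    refine my_cfc_posSemidef hX _ fun i => ?_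
    have habs : |hX.eigenvalues i| ≤ c :=
      Finset.single_le_sum (f := fun j => |hX.eigenvalues j|)
        (fun j _ => abs_nonneg _) (Finset.mem_univ i)
    have := neg_abs_le (hX.eigenvalues i)
    simp only [one_mul]
    linarith
  have h2 := hΦpos _ h1
  rw [one_smul] at h2
  rw [one_smul] at h1
  rw [map_add, LinearMap.map_smul, hΦ1] at h2
  have h3 := h2.isHermitian.sub (smul_one_isHermitian (n := n) c)
  simpa using h3

/-- quadratic form of a PSD matrix has nonneg real part -/
lemma quad_nonneg {P : Matrix (Fin n) (Fin n) ℂ} (hP : P.PosSemidef) (x : Fin n → ℂ) :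
    0 ≤ (star x ⬝ᵥ P *ᵥ x).re := by
  have := hP.dotProduct_mulVec_nonneg x
  rw [Complex.le_def] at this
  simpa using this.1

lemma quad_sub (P Q : Matrix (Fin n) (Fin n) ℂ) (x : Fin n → ℂ) :
    (star x ⬝ᵥ (P - Q) *ᵥ x).re = (star x ⬝ᵥ P *ᵥ x).re - (star x ⬝ᵥ Q *ᵥ x).re := by
  rw [Matrix.sub_mulVec, dotProduct_sub, Complex.sub_re]

lemma quad_smul_add (a b : ℝ) (P : Matrix (Fin n) (Fin n) ℂ) (x : Fin n → ℂ) :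
    (star x ⬝ᵥ ((a : ℂ) • P + (b : ℂ) • 1) *ᵥ x).re
      = a * (star x ⬝ᵥ P *ᵥ x).re + b * (star x ⬝ᵥ x).re := by
  rw [Matrix.add_mulVec, dotProduct_add, Complex.add_re, Matrix.smul_mulVec,
    Matrix.smul_mulVec, Matrix.one_mulVec, dotProduct_smul, dotProduct_smul]
  simp [Complex.re_ofReal_mul]

end Phi

lemma jensen_superquadratic (f : ℝ → ℝ) (hf : Superquadratic f)
    (hdec : AntitoneOn f (Set.Ici (0 : ℝ)))
    (Φ : Matrix (Fin n) (Fin n) ℂ →ₗ[ℂ] Matrix (Fin n) (Fin n) ℂ)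
    (hΦ1 : Φ 1 = 1)
    (hΦpos : ∀ A : Matrix (Fin n) (Fin n) ℂ, A.PosSemidef → (Φ A).PosSemidef)
    {A : Matrix (Fin n) (Fin n) ℂ} (hA : A.PosSemidef) (hn : 0 < n)
    (x : Fin n → ℂ) (hx : star x ⬝ᵥ x = 1) :
    f ((star x ⬝ᵥ (Φ A) *ᵥ x).re) + f ((⨆ i, hA.1.eigenvalues i) - ⨅ i, hA.1.eigenvalues i)
      ≤ (star x ⬝ᵥ (Φ (hA.1.cfc f)) *ᵥ x).re := by
  haveI : Nonempty (Fin n) := ⟨⟨0, hn⟩⟩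
  set lam := hA.1.eigenvalues with hlam
  set M := ⨆ i, lam i with hM
  set m := ⨅ i, lam i with hm
  have hbdd : BddBelow (Set.range lam) := (Set.finite_range lam).bddBelow
  have hbddA : BddAbove (Set.range lam) := (Set.finite_range lam).bddAbove
  have hmle : ∀ i, m ≤ lam i := fun i => ciInf_le hbdd i
  have hleM : ∀ i, lam i ≤ M := fun i => le_ciSup hbddA i
  have hm0 : 0 ≤ m := le_ciInf fun i => hA.eigenvalues_nonneg i
  have hmM : m ≤ M := (hmle (Classical.arbitrary _)).trans (hleM _)
  have hxre : (star x ⬝ᵥ x).re = 1 := by rw [hx]; simp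
  set t := (star x ⬝ᵥ (Φ A) *ᵥ x).re with ht
  -- m ≤ t
  have hmt : m ≤ t := by
    have hAm := my_cfc_posSemidef hA.1 (fun r => 1 * r + (-m))
      (fun i => by have := hmle i; linarith)
    rw [my_cfc_affine hA.1 1 (-m)] at hAm
    have h2 := hΦpos _ hAm
    rw [map_add, LinearMap.map_smul, LinearMap.map_smul, hΦ1] at h2
    have h3 := quad_nonneg h2 x
    rw [quad_smul_add, hxre, ← ht] at h3
    linarith
  -- t ≤ M
  have htM : t ≤ M := by
    have hAM := my_cfc_posSemidef hA.1 (fun r => (-1) * r + M)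
      (fun i => by have := hleM i; linarith)
    rw [my_cfc_affine hA.1 (-1) M] at hAM
    have h2 := hΦpos _ hAM
    rw [map_add, LinearMap.map_smul, LinearMap.map_smul, hΦ1] at h2
    have h3 := quad_nonneg h2 x
    rw [quad_smul_add, hxre, ← ht] at h3
    linarith
  have ht0 : 0 ≤ t := hm0.trans hmt
  obtain ⟨C, hC⟩ := hf t ht0
  set d : ℝ := f t - C * t + f (M - m) with hd
  have hpt : ∀ i, C * lam i + d ≤ f (lam i) := by
    intro i
    have h1 := hC (lam i) (hA.eigenvalues_nonneg i)
    have habs : |lam i - t| ≤ M - m := by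
      rw [abs_le]
      constructor
      · linarith [hmle i, htM]
      · linarith [hleM i, hmt]
    have h2 : f (M - m) ≤ f |lam i - t| :=
      hdec (Set.mem_Ici.mpr (abs_nonneg _)) (Set.mem_Ici.mpr (by linarith)) habs
    rw [hd]; linarith
  have hdiff : (hA.1.cfc f - hA.1.cfc (fun r => C * r + d)).PosSemidef := by
    rw [my_cfc_sub]
    exact my_cfc_posSemidef hA.1 _ fun i => by have := hpt i; linarith
  have h2 := hΦpos _ hdiff
  rw [map_sub] at h2
  have h3 := quad_nonneg h2 x
  rw [quad_sub] at h3
  have h4 : (star x ⬝ᵥ (Φ (hA.1.cfc fun r => C * r + d)) *ᵥ x).re = C * t + d := by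
    rw [my_cfc_affine hA.1 C d, map_add, LinearMap.map_smul, LinearMap.map_smul, hΦ1,
      quad_smul_add, hxre, mul_one, ← ht]
  rw [h4] at h3
  rw [hd] at h3
  linarith

lemma dot_star_self_eq (x : Fin n → ℂ) :
    star x ⬝ᵥ x = (((star x ⬝ᵥ x).re : ℝ) : ℂ) := by
  rw [dot_star_self]; norm_cast

lemma dot_scale (c : ℝ) (x y : Fin n → ℂ) :
    star ((c : ℂ) • x) ⬝ᵥ ((c : ℂ) • y) = ((c ^ 2 : ℝ) : ℂ) * (star x ⬝ᵥ y) := by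
  rw [star_smul, smul_dotProduct, dotProduct_smul, smul_smul, smul_eq_mul]
  congr 1
  rw [Complex.star_def, Complex.conj_ofReal]
  push_cast; ring

lemma quad_scale (c : ℝ) (P : Matrix (Fin n) (Fin n) ℂ) (x : Fin n → ℂ) :
    star ((c : ℂ) • x) ⬝ᵥ P *ᵥ ((c : ℂ) • x) = ((c ^ 2 : ℝ) : ℂ) * (star x ⬝ᵥ P *ᵥ x) := by
  rw [Matrix.mulVec_smul, dot_scale]

/-- eigenvalue inequality for concave decreasing superquadratic functions
and unital positive linear maps. -/
theorem eigenvalue_superquadratic_positive_map {n : ℕ} (f : ℝ → ℝ) (hf : Superquadratic f)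
    (hconc : ConcaveOn ℝ (Set.Ici (0 : ℝ)) f) (hdec : AntitoneOn f (Set.Ici (0 : ℝ)))
    (Φ : Matrix (Fin n) (Fin n) ℂ →ₗ[ℂ] Matrix (Fin n) (Fin n) ℂ)
    (hΦ1 : Φ 1 = 1) (hΦpos : ∀ A : Matrix (Fin n) (Fin n) ℂ, A.PosSemidef → (Φ A).PosSemidef)
    (A : Matrix (Fin n) (Fin n) ℂ) (hA : A.PosSemidef) (k : Fin n) :
    lkth (mfun f (Φ A)) k ≤ lkth (Φ (mfun f A)) k - f (lmax A - lmin A) := by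
  classical
  have hn : 0 < n := k.pos
  have hBpsd : (Φ A).PosSemidef := hΦpos A hA
  have hB : (Φ A).IsHermitian := hBpsd.1
  rw [mfun, mfun, dif_pos hA.1, dif_pos hB, lmax, lmin, dif_pos hA.1, dif_pos hA.1]
  set M := ⨆ i, hA.1.eigenvalues i with hM
  set m := ⨅ i, hA.1.eigenvalues i with hm
  have hfBh : (hB.cfc f).IsHermitian := my_cfc_isHermitian hB f
  have hH : (Φ (hA.1.cfc f)).IsHermitian :=
    phi_hermitian Φ hΦ1 hΦpos (my_cfc_isHermitian hA.1 f)
  set σ := Tuple.sort hB.eigenvalues with hσ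
  set μ := hB.eigenvalues (σ k) with hμ
  have hμ0 : 0 ≤ μ := hBpsd.eigenvalues_nonneg _
  set v : Fin n → Fin n → ℂ := fun i => ⇑(hB.eigenvectorBasis i) with hv
  have hvd : ∀ i j, star (v i) ⬝ᵥ v j = if i = j then 1 else 0 := eigvec_dot hB
  -- LHS bound
  have hLHS : lkth (hB.cfc f) k ≤ f μ := by
    rw [lkth, dif_pos hfBh]
    apply lkth_le_core hfBh (span ℂ (v '' ↑((Finset.Ici k).image σ))) (f μ) k
    · rw [finrank_span_T hvd, Finset.card_image_of_injective _ (Equiv.injective σ),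
        Fin.card_Ici]
    · intro x hx
      refine span_quad_le (μ := fun i => f (hB.eigenvalues i)) hvd (fun i => ?_) (f μ) (fun i hi => ?_) hx
      · exact my_cfc_mulVec hB f i
      · obtain ⟨p, hp, rfl⟩ := Finset.mem_image.mp hi
        have h1 : μ ≤ hB.eigenvalues (σ p) :=
          Tuple.monotone_sort hB.eigenvalues (Finset.mem_Ici.mp hp)
        exact hdec (Set.mem_Ici.mpr hμ0) (Set.mem_Ici.mpr (hμ0.trans h1)) h1
  -- RHS bound
  have hRHS : f μ + f (M - m) ≤ lkth (Φ (hA.1.cfc f)) k := by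
    rw [lkth, dif_pos hH]
    apply lkth_ge_core hH (span ℂ (v '' ↑((Finset.Iic k).image σ))) _ k
    · rw [finrank_span_T hvd, Finset.card_image_of_injective _ (Equiv.injective σ),
        Fin.card_Iic]
    · intro x hx
      rcases eq_or_ne x 0 with rfl | hx0
      · simp
      · set r := (star x ⬝ᵥ x).re with hr
        have hrpos : 0 < r := dot_star_self_re_pos hx0
        set c : ℝ := (Real.sqrt r)⁻¹ with hc
        have hc2 : c ^ 2 * r = 1 := by
          rw [hc, ← Real.sqrt_inv]
          rw [Real.sq_sqrt (by positivity)]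
          field_simp
        set u : Fin n → ℂ := (c : ℂ) • x with hu
        have humem : u ∈ span ℂ (v '' ↑((Finset.Iic k).image σ)) :=
          Submodule.smul_mem _ _ hx
        have hu1 : star u ⬝ᵥ u = 1 := by
          rw [hu, dot_scale, dot_star_self_eq x, ← hr, ← Complex.ofReal_mul, hc2,
            Complex.ofReal_one]
        -- bounds on t_u
        have hBxle : (star x ⬝ᵥ (Φ A) *ᵥ x).re ≤ μ * r := by
          refine span_quad_le (μ := hB.eigenvalues) hvd
            (fun i => hB.mulVec_eigenvectorBasis i) μ (fun i hi => ?_) hx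
          obtain ⟨p, hp, rfl⟩ := Finset.mem_image.mp hi
          exact Tuple.monotone_sort hB.eigenvalues (Finset.mem_Iic.mp hp)
        have hBxge : 0 ≤ (star x ⬝ᵥ (Φ A) *ᵥ x).re := by
          have := span_quad_ge (μ := hB.eigenvalues) hvd
            (fun i => hB.mulVec_eigenvectorBasis i) 0
            (fun i _ => hBpsd.eigenvalues_nonneg i) hx
          simpa using this
        have hqu : (star u ⬝ᵥ (Φ A) *ᵥ u).re = c ^ 2 * (star x ⬝ᵥ (Φ A) *ᵥ x).re := by
          rw [hu, quad_scale, Complex.re_ofReal_mul]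
        have htu0 : 0 ≤ (star u ⬝ᵥ (Φ A) *ᵥ u).re := by
          rw [hqu]; positivity
        have htuμ : (star u ⬝ᵥ (Φ A) *ᵥ u).re ≤ μ := by
          rw [hqu]
          calc c ^ 2 * (star x ⬝ᵥ (Φ A) *ᵥ x).re ≤ c ^ 2 * (μ * r) := by
                refine mul_le_mul_of_nonneg_left hBxle (by positivity)
            _ = μ := by rw [show c ^ 2 * (μ * r) = μ * (c ^ 2 * r) by ring, hc2, mul_one]
        have hJ := jensen_superquadratic f hf hdec Φ hΦ1 hΦpos hA hn u hu1
        rw [← hM, ← hm] at hJ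
        have hfle : f μ ≤ f ((star u ⬝ᵥ (Φ A) *ᵥ u).re) :=
          hdec (Set.mem_Ici.mpr htu0) (Set.mem_Ici.mpr hμ0) htuμ
        have hHu : (star u ⬝ᵥ (Φ (hA.1.cfc f)) *ᵥ u).re
            = c ^ 2 * (star x ⬝ᵥ (Φ (hA.1.cfc f)) *ᵥ x).re := by
          rw [hu, quad_scale, Complex.re_ofReal_mul]
        rw [hHu] at hJ
        have hkey : f μ + f (M - m) ≤ c ^ 2 * (star x ⬝ᵥ (Φ (hA.1.cfc f)) *ᵥ x).re := by
          linarith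
        calc (f μ + f (M - m)) * r
            ≤ (c ^ 2 * (star x ⬝ᵥ (Φ (hA.1.cfc f)) *ᵥ x).re) * r :=
              mul_le_mul_of_nonneg_right hkey hrpos.le
          _ = (c ^ 2 * r) * (star x ⬝ᵥ (Φ (hA.1.cfc f)) *ᵥ x).re := by ring
          _ = (star x ⬝ᵥ (Φ (hA.1.cfc f)) *ᵥ x).re := by rw [hc2, one_mul]
  linarith
end
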